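/- Let A be a Z-tensor with FEA(q,A) ≠ ∅, and let y be the least element of FEA(q,A). If u* ∈ SOL(q,A) is a minimal l_p-norm solution (‖u*‖_p^p ≤ ‖u‖_p^p for all u ∈ SOL(q,A)) for some p ∈ (0,1), then u* = y; consequently u* is a sparse solution of TCP(q,A). -/
import Mathlib


open Finset

/-- `(A u^{m-1})_i` for a tensor of order `m+1` and dimension `n`:
the first index is separated, the remaining `m` indices are a function `Fin m → Fin n`. -/
def tmap {n m : ℕ} (A : Fin n → (Fin m → Fin n) → ℝ) (u : Fin n → ℝ) (i : Fin n) : ℝ :=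
  ∑ j : Fin m → Fin n, A i j * ∏ k, u (j k)

/-- Solution set of the tensor complementarity problem TCP(q, A). -/
def SOL {n m : ℕ} (A : Fin n → (Fin m → Fin n) → ℝ) (q : Fin n → ℝ) : Set (Fin n → ℝ) :=
  {u | (∀ i, 0 ≤ u i) ∧ (∀ i, 0 ≤ tmap A u i + q i) ∧ ∑ i, u i * (tmap A u i + q i) = 0}

/-- `‖u‖₀`: the number of nonzero components of `u`. -/
noncomputable def nnz {n : ℕ} (u : Fin n → ℝ) : ℕ := (Finset.univ.filter fun i => u i ≠ 0).card


/-- Feasible set of TCP(q,A). -/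
def FEA {n m : ℕ} (A : Fin n → (Fin m → Fin n) → ℝ) (q : Fin n → ℝ) : Set (Fin n → ℝ) :=
  {u | (∀ i, 0 ≤ u i) ∧ ∀ i, 0 ≤ tmap A u i + q i}

/-- `A` is a Z-tensor: all off-diagonal entries are nonpositive. -/
def IsZTensor {n m : ℕ} (A : Fin n → (Fin m → Fin n) → ℝ) : Prop :=
  ∀ i (j : Fin m → Fin n), (∃ k, j k ≠ i) → A i j ≤ 0

theorem minimal_lp_solution_is_least_element_and_sparse {n m : ℕ}
    (A : Fin n → (Fin m → Fin n) → ℝ) (q : Fin n → ℝ) (hZ : IsZTensor A)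
    (hfea : (FEA A q).Nonempty) (y : Fin n → ℝ) (hy : y ∈ FEA A q)
    (hleast : ∀ v ∈ FEA A q, ∀ i, y i ≤ v i) (hysol : y ∈ SOL A q)
    (p : ℝ) (hp0 : 0 < p) (hp1 : p < 1) (ustar : Fin n → ℝ) (hustar : ustar ∈ SOL A q)
    (hminlp : ∀ u ∈ SOL A q, ∑ i, |ustar i| ^ p ≤ ∑ i, |u i| ^ p) :
    ustar = y ∧ ∀ u ∈ SOL A q, nnz ustar ≤ nnz u := by
  have hus_fea : ustar ∈ FEA A q := ⟨hustar.1, hustar.2.1⟩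
  have hle : ∀ i, y i ≤ ustar i := hleast ustar hus_fea
  have heq : ustar = y := by
    funext i
    by_contra h
    have hlt : y i < ustar i := lt_of_le_of_ne (hle i) (Ne.symm h)
    have hsum : ∑ i, |ustar i| ^ p ≤ ∑ i, |y i| ^ p := hminlp y hysol
    have hstrict : ∑ j, |y j| ^ p < ∑ j, |ustar j| ^ p := by
      refine Finset.sum_lt_sum (fun j _ => ?_) ⟨i, Finset.mem_univ i, ?_⟩
      · rw [abs_of_nonneg (hysol.1 j), abs_of_nonneg (hustar.1 j)]
        exact Real.rpow_le_rpow (hysol.1 j) (hle j) hp0.le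
      · rw [abs_of_nonneg (hysol.1 i), abs_of_nonneg (hustar.1 i)]
        exact Real.rpow_lt_rpow (hysol.1 i) hlt hp0
    exact absurd hsum (not_le.mpr hstrict)
  refine ⟨heq, fun u hu => ?_⟩
  have hleu : ∀ i, y i ≤ u i := hleast u ⟨hu.1, hu.2.1⟩
  rw [heq]
  apply Finset.card_le_card
  intro i hi
  simp only [Finset.mem_filter, Finset.mem_univ, true_and] at hi ⊢
  intro hu0
  exact hi (le_antisymm (hu0 ▸ hleu i) (hysol.1 i))
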